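/- In the one-relay stage game with the basic incentive mechanism, the client's action component T (report what was received to the contract) weakly dominates X (not reporting): for every fixed action of chance, every fixed action of the relay, and every fixed output choice of the client, the client's payoff when playing T is at least its payoff when playing X, and strictly greater whenever the relay sent a validly signed response. -/
import Mathlib


/-- What the client received from the relay in a query: a validly signed
response proving True, a validly signed claim of False, or nothing (no validly
signed response). -/
inductive RelayMsg | provedTrue | claimFalse | nothing
deriving DecidableEq

/-- The client's output choice: `A` = output True, `A'` = output False,
`O` = output nothing. -/
inductive ClientOut | A | A' | O
deriving DecidableEq

/-- Net payoff of the client from the reporting part of the query: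
`reportT = true` means playing `T` (report what was received), `false` means
playing `X` (not reporting).  The client deposited `p + e` at request time. -/
def reportPay (p e r : ℝ) (msg : RelayMsg) (reportT : Bool) : ℝ :=
  if reportT then
    match msg with
    | .provedTrue => -p          -- gets back e, pays p
    | .claimFalse => -(p - r)    -- gets back e + r
    | .nothing => -(p + e)       -- nothing validly signed to report: all forfeited
  else -(p + e)                  -- not reporting: the whole deposit is forfeited

/-- Additional loss from the output: `−v` iff the output differs from the
ground truth, `−c` iff the client outputs nothing. -/
def outPay (v c : ℝ) (truth : Bool) : ClientOut → ℝ
  | .A => if truth then 0 else -v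
  | .A' => if truth then -v else 0
  | .O => -c

/-- Total per-query payoff of the client. -/
def clientPay (p e r v c : ℝ) (truth : Bool) (msg : RelayMsg)
    (reportT : Bool) (out : ClientOut) : ℝ :=
  reportPay p e r msg reportT + outPay v c truth out

/-- **Reporting weakly dominates not reporting**: for every fixed action of
chance, every fixed relay message and every fixed output choice, the client's
payoff when playing `T` is at least its payoff when playing `X`, and strictly
greater whenever the relay sent a validly signed response. -/
theorem client_report_weakly_dominates (p e r v c : ℝ)
    (hp : 0 ≤ p) (he : 0 < e) (hr0 : 0 ≤ r) (hrp : r ≤ p) (hv : 0 ≤ v) (hc : 0 ≤ c) :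
    ∀ (truth : Bool) (msg : RelayMsg) (out : ClientOut),
      clientPay p e r v c truth msg true out ≥ clientPay p e r v c truth msg false out ∧
      (msg ≠ .nothing →
        clientPay p e r v c truth msg true out > clientPay p e r v c truth msg false out) := by
  intro truth msg out
  cases msg <;> simp [clientPay, reportPay] <;> constructor <;> intros <;> linarith
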